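/- With the same setup, if instead the difference sequence Γ_n = γ_{n+1}−γ_n is monotone decreasing, then for each k, ‖F(e^{i·})/(e^{i·}−α_k)‖_{Y_γ}^2 ≤ ‖H_{α_k}‖_{Y_γ}^2 ≤ ‖G(e^{i·})/(1−ᾱ_k e^{i·})‖_{Y_γ}^2. -/

import Mathlib

open Finset Filter

/-- `Y_γ` semi-norm squared, valued in `ℝ≥0∞` (the weights `γ_{n+1}-γ_n` are nonnegative). -/
noncomputable def ynorm2e (γ : ℕ → ℝ) (a : ℕ → ℂ) : ENNReal :=
  ∑' n, ENNReal.ofReal ((γ (n + 1) - γ n) * ‖a n‖ ^ 2)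

def IsCoeffs (a : ℕ → ℂ) (F : ℂ → ℂ) : Prop :=
  ∀ z : ℂ, ‖z‖ < 1 → HasSum (fun n => a n * z ^ n) (F z)

/-!
Multiplying a power series `c` by a Blaschke factor `b_α(z) = (z - α) / (1 - ᾱ z)` does not
increase any partial sum `∑_{i<N} |c_i|²`: if `t` are the coefficients of `z c(z) / (1 - ᾱ z)`,
the new coefficients are `-α c_n + (1 - |α|²) t_n`, and the defect after `N` terms is exactly
`(1 - |α|²) |t_N|²`. Since the weights `γ_{n+1} - γ_n` are nonnegative and decreasing, summation
by parts turns this domination of partial sums into domination of `Y_γ`-norms.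

`F / (z - α_k)` is `H_{α_k}` times the Blaschke product over `α_1, …, α_{k-1}`, and `H_{α_k}` is
`G / (1 - ᾱ_k z)` times the Blaschke product over the remaining zeros. With infinitely many zeros,
the partial sum estimate bounds the coefficients of the partial products uniformly, so a
subsequence converges coefficientwise; by dominated convergence and uniqueness of power series
coefficients, the limit is the coefficient sequence of `H_{α_k}`.
-/

open Topology ComplexConjugate

section PowerSeries

variable {𝕜 : Type*} [NontriviallyNormedField 𝕜]

open FormalMultilinearSeries in
theorem le_radius_ofScalars_of_summable {a : ℕ → 𝕜} {w : 𝕜}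
    (h : Summable fun n => a n * w ^ n) : (‖w‖₊ : ENNReal) ≤ (ofScalars 𝕜 a).radius := by
  refine (ofScalars 𝕜 a).le_radius_of_tendsto (l := 0) ?_
  simpa [ofScalars_norm] using h.tendsto_atTop_zero.norm

theorem summable_norm_mul_pow_of_summable {a : ℕ → 𝕜} {w z : 𝕜}
    (h : Summable fun n => a n * w ^ n) (hz : ‖z‖ < ‖w‖) :
    Summable fun n => ‖a n * z ^ n‖ := by
  have hz' : z ∈ Metric.eball (0 : 𝕜) (FormalMultilinearSeries.ofScalars 𝕜 a).radius :=
    lt_of_lt_of_le (by simpa [edist_zero_right, ← NNReal.coe_lt_coe] using hz)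
      (le_radius_ofScalars_of_summable h)
  simpa [FormalMultilinearSeries.ofScalars_apply_eq, mul_comm] using
    (FormalMultilinearSeries.ofScalars 𝕜 a).summable_norm_apply hz'

end PowerSeries

theorem exists_ofReal_mem_Ioo_notMem (S : Finset ℂ) {a b : ℝ} (hab : a < b) :
    ∃ x ∈ Set.Ioo a b, (x : ℂ) ∉ S := by
  obtain ⟨x, hx, hxS⟩ := ((Set.Ioo_infinite hab).sdiff
    (S.finite_toSet.preimage Complex.ofReal_injective.injOn)).nonempty
  exact ⟨x, hx, hxS⟩

theorem IsCoeffs.summable_norm {a : ℕ → ℂ} {f : ℂ → ℂ} (ha : IsCoeffs a f) {z : ℂ}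
    (hz : ‖z‖ < 1) : Summable fun n => ‖a n * z ^ n‖ := by
  have hw : ‖(((‖z‖ + 1) / 2 : ℝ) : ℂ)‖ = (‖z‖ + 1) / 2 := by
    rw [Complex.norm_real, Real.norm_of_nonneg (by positivity)]
  exact summable_norm_mul_pow_of_summable (ha _ (by rw [hw]; linarith)).summable
    (by rw [hw]; linarith)

theorem eq_zero_of_hasSum_mul_pow_zero_off_finset {d : ℕ → ℂ} (S : Finset ℂ) {r : ℝ} (hr : 0 < r)
    (hd : ∀ z : ℂ, ‖z‖ < r → z ∉ S → HasSum (fun n => d n * z ^ n) 0) : d = 0 := by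
  set p := FormalMultilinearSeries.ofScalars ℂ d
  obtain ⟨x, ⟨hx0, hxr⟩, hxS⟩ := exists_ofReal_mem_Ioo_notMem S hr
  have hxn : ‖(x : ℂ)‖ = x := by rw [Complex.norm_real, Real.norm_of_nonneg hx0.le]
  have hp : 0 < p.radius := lt_of_lt_of_le (by simpa using hx0.ne')
    (le_radius_ofScalars_of_summable (hd x (by rwa [hxn]) hxS).summable)
  have hsum : ∀ z : ℂ, ‖z‖ < r → z ∉ S → p.sum z = 0 := fun z hz hzS => by
    simpa [p, FormalMultilinearSeries.sum, FormalMultilinearSeries.ofScalars_apply_eq, mul_comm]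
      using (hd z hz hzS).tsum_eq
  have hpa : HasFPowerSeriesAt p.sum p 0 := (p.hasFPowerSeriesOnBall hp).hasFPowerSeriesAt
  have hfreq : ∃ᶠ z in 𝓝[≠] (0 : ℂ), p.sum z = 0 := by
    refine Eventually.frequently ?_
    have hS : ((S.erase 0 : Finset ℂ) : Set ℂ)ᶜ ∈ 𝓝[≠] (0 : ℂ) :=
      mem_nhdsWithin_of_mem_nhds ((S.erase 0).finite_toSet.isClosed.compl_mem_nhds (by simp))
    filter_upwards [hS, self_mem_nhdsWithin, mem_nhdsWithin_of_mem_nhds (Metric.ball_mem_nhds 0 hr)]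
      with z hzS hz0 hzr
    exact hsum z (by simpa using hzr) (by simp_all)
  have hzero := (hpa.analyticAt.frequently_zero_iff_eventually_zero).1 hfreq
  exact (FormalMultilinearSeries.ofScalars_series_eq_zero (E := ℂ)).1 (hpa.congr hzero).eq_zero

theorem eq_of_hasSum_mul_pow_off_finset {a c : ℕ → ℂ} {f : ℂ → ℂ} (S : Finset ℂ)
    (ha : ∀ z : ℂ, ‖z‖ < 1 → z ∉ S → HasSum (fun n => a n * z ^ n) (f z))
    (hc : ∀ z : ℂ, ‖z‖ < 1 → z ∉ S → HasSum (fun n => c n * z ^ n) (f z)) : a = c := by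
  refine sub_eq_zero.1 (eq_zero_of_hasSum_mul_pow_zero_off_finset S one_pos fun z hz hzS => ?_)
  simpa [sub_mul] using (ha z hz hzS).sub (hc z hz hzS)

theorem IsCoeffs.mul {a b : ℕ → ℂ} {f g : ℂ → ℂ} (ha : IsCoeffs a f) (hb : IsCoeffs b g) :
    IsCoeffs (fun n => ∑ i ∈ range (n + 1), a i * b (n - i)) (fun z => f z * g z) := by
  intro z hz
  have h := hasSum_sum_range_mul_of_summable_norm (ha.summable_norm hz) (hb.summable_norm hz)
  rw [(ha z hz).tsum_eq, (hb z hz).tsum_eq] at h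
  refine h.congr_fun fun n => ?_
  rw [sum_mul]
  refine sum_congr rfl fun i hi => ?_
  rw [← pow_sub_mul_pow z (Nat.le_of_lt_succ (mem_range.1 hi))]
  ring

noncomputable def blaschke (α z : ℂ) : ℂ := (z - α) / (1 - conj α * z)

theorem one_sub_conj_mul_ne_zero {α z : ℂ} (hα : ‖α‖ < 1) (hz : ‖z‖ < 1) :
    1 - conj α * z ≠ 0 := by
  refine sub_ne_zero.2 fun h => ?_
  have : ‖conj α * z‖ < 1 := by
    rw [norm_mul, Complex.norm_conj]
    nlinarith [norm_nonneg α, norm_nonneg z]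
  rw [← h, norm_one] at this
  exact lt_irrefl _ this

theorem blaschke_ne_zero {α z : ℂ} (hα : ‖α‖ < 1) (hz : ‖z‖ < 1) (hzα : z ≠ α) :
    blaschke α z ≠ 0 :=
  div_ne_zero (sub_ne_zero.2 hzα) (one_sub_conj_mul_ne_zero hα hz)

theorem norm_blaschke_le_one {α z : ℂ} (hα : ‖α‖ < 1) (hz : ‖z‖ < 1) : ‖blaschke α z‖ ≤ 1 := by
  rw [blaschke, norm_div, div_le_one (norm_pos_iff.2 (one_sub_conj_mul_ne_zero hα hz)),
    ← sq_le_sq₀ (norm_nonneg _) (norm_nonneg _), Complex.sq_norm, Complex.sq_norm]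
  have hα2 : Complex.normSq α ≤ 1 := by
    rw [Complex.normSq_eq_norm_sq]; nlinarith [norm_nonneg α]
  have hz2 : Complex.normSq z ≤ 1 := by
    rw [Complex.normSq_eq_norm_sq]; nlinarith [norm_nonneg z]
  have key : Complex.normSq (1 - conj α * z) - Complex.normSq (z - α)
      = (1 - Complex.normSq α) * (1 - Complex.normSq z) := by
    simp only [Complex.normSq_apply, Complex.sub_re, Complex.sub_im, Complex.mul_re,
      Complex.mul_im, Complex.one_re, Complex.one_im, Complex.conj_re, Complex.conj_im]
    ring
  nlinarith

noncomputable def blaschkeCoeff (α : ℂ) : ℕ → ℂ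
  | 0 => -α
  | i + 1 => (1 - Complex.normSq α) * conj α ^ i

theorem isCoeffs_blaschkeCoeff {α : ℂ} (hα : ‖α‖ < 1) :
    IsCoeffs (blaschkeCoeff α) (blaschke α) := by
  intro z hz
  have hαz : ‖conj α * z‖ < 1 := by
    rw [norm_mul, Complex.norm_conj]; nlinarith [norm_nonneg α, norm_nonneg z]
  rw [← hasSum_nat_add_iff' 1]
  have hgeom := (hasSum_geometric_of_norm_lt_one hαz).mul_left ((1 - Complex.normSq α) * z)
  have hval : blaschke α z - ∑ i ∈ range 1, blaschkeCoeff α i * z ^ i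
      = (1 - Complex.normSq α) * z * (1 - conj α * z)⁻¹ := by
    have hd := one_sub_conj_mul_ne_zero hα hz
    simp only [blaschke, blaschkeCoeff, sum_range_one, pow_zero, mul_one, ← Complex.mul_conj,
      sub_neg_eq_add]
    rw [div_add' _ _ _ hd, div_eq_mul_inv]
    ring
  rw [hval]
  exact hgeom.congr_fun fun n => by simp only [blaschkeCoeff]; ring

noncomputable def blaschkeMul (α : ℂ) (c : ℕ → ℂ) (n : ℕ) : ℂ :=
  ∑ i ∈ range (n + 1), blaschkeCoeff α i * c (n - i)

theorem IsCoeffs.blaschkeMul {α : ℂ} (hα : ‖α‖ < 1) {c : ℕ → ℂ} {f : ℂ → ℂ}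
    (hc : IsCoeffs c f) : IsCoeffs (blaschkeMul α c) (fun z => blaschke α z * f z) :=
  (isCoeffs_blaschkeCoeff hα).mul hc

/-- The coefficients of `z f(z) / (1 - ᾱ z)`, where `f` has coefficients `c`. -/
noncomputable def geomConv (α : ℂ) (c : ℕ → ℂ) (n : ℕ) : ℂ :=
  ∑ i ∈ range n, conj α ^ i * c (n - 1 - i)

theorem geomConv_succ (α : ℂ) (c : ℕ → ℂ) (n : ℕ) :
    geomConv α c (n + 1) = c n + conj α * geomConv α c n := by
  rw [geomConv, sum_range_succ', geomConv, mul_sum]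
  simp only [pow_succ, Nat.add_sub_cancel, Nat.sub_zero, pow_zero, one_mul, add_comm (c n)]
  congr 1
  refine sum_congr rfl fun i _ => ?_
  rw [show n - (i + 1) = n - 1 - i by omega]
  ring

theorem blaschkeMul_eq (α : ℂ) (c : ℕ → ℂ) (n : ℕ) :
    blaschkeMul α c n = -α * c n + (1 - Complex.normSq α) * geomConv α c n := by
  rw [blaschkeMul, sum_range_succ', geomConv, mul_sum, add_comm]
  simp only [blaschkeCoeff, Nat.sub_zero]
  congr 1
  refine sum_congr rfl fun i _ => ?_
  rw [show n - (i + 1) = n - 1 - i by omega]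
  ring

theorem sum_range_normSq_blaschkeMul_add (α : ℂ) (c : ℕ → ℂ) (n : ℕ) :
    ∑ i ∈ range n, Complex.normSq (blaschkeMul α c i)
        + (1 - Complex.normSq α) * Complex.normSq (geomConv α c n)
      = ∑ i ∈ range n, Complex.normSq (c i) := by
  induction n with
  | zero => simp [geomConv]
  | succ n ih =>
    rw [sum_range_succ, sum_range_succ, ← ih, blaschkeMul_eq, geomConv_succ]
    simp only [Complex.normSq_apply, Complex.add_re, Complex.add_im, Complex.mul_re,
      Complex.mul_im, Complex.sub_re, Complex.sub_im, Complex.neg_re, Complex.neg_im,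
      Complex.conj_re, Complex.conj_im, Complex.ofReal_re, Complex.ofReal_im, Complex.one_re,
      Complex.one_im]
    ring

theorem sum_range_sq_norm_blaschkeMul_le {α : ℂ} (hα : ‖α‖ ≤ 1) (c : ℕ → ℂ) (n : ℕ) :
    ∑ i ∈ range n, ‖blaschkeMul α c i‖ ^ 2 ≤ ∑ i ∈ range n, ‖c i‖ ^ 2 := by
  simp only [Complex.sq_norm, ← sum_range_normSq_blaschkeMul_add α c n, le_add_iff_nonneg_right]
  refine mul_nonneg (sub_nonneg.2 ?_) (Complex.normSq_nonneg _)
  rw [Complex.normSq_eq_norm_sq]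
  exact pow_le_one₀ (norm_nonneg α) hα

theorem exists_isCoeffs_prod_blaschke_mul {ι : Type*} (s : Finset ι) {α : ι → ℂ}
    (hα : ∀ j ∈ s, ‖α j‖ < 1) {c : ℕ → ℂ} {f : ℂ → ℂ} (hc : IsCoeffs c f) :
    ∃ a : ℕ → ℂ, IsCoeffs a (fun z => (∏ j ∈ s, blaschke (α j) z) * f z) ∧
      ∀ n, ∑ i ∈ range n, ‖a i‖ ^ 2 ≤ ∑ i ∈ range n, ‖c i‖ ^ 2 := by
  classical
  induction s using Finset.induction_on with
  | empty => exact ⟨c, by simpa using hc, fun n => le_rfl⟩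
  | insert j s hj ih =>
    obtain ⟨a, ha, hle⟩ := ih fun i hi => hα i (mem_insert_of_mem hi)
    have hαj := hα j (mem_insert_self j s)
    refine ⟨blaschkeMul (α j) a, ?_,
      fun n => (sum_range_sq_norm_blaschkeMul_le hαj.le a n).trans (hle n)⟩
    simpa only [prod_insert hj, mul_assoc] using ha.blaschkeMul hαj

theorem sum_range_mul_le_of_antitone {w p q : ℕ → ℝ} (hw : Antitone w) (hw0 : ∀ n, 0 ≤ w n)
    (hpq : ∀ n, ∑ i ∈ range n, p i ≤ ∑ i ∈ range n, q i) (N : ℕ) :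
    ∑ i ∈ range N, w i * p i ≤ ∑ i ∈ range N, w i * q i := by
  have hr : ∀ n, 0 ≤ ∑ i ∈ range n, (q i - p i) := fun n => by
    simpa [sum_sub_distrib] using hpq n
  have hparts := sum_range_by_parts w (fun i => q i - p i) N
  simp only [smul_eq_mul] at hparts
  rw [← sub_nonneg, ← sum_sub_distrib]
  simp only [← mul_sub, hparts, sub_nonneg]
  refine (sum_nonpos fun i _ => ?_).trans (mul_nonneg (hw0 _) (hr N))
  exact mul_nonpos_of_nonpos_of_nonneg (sub_nonpos.2 (hw i.le_succ)) (hr (i + 1))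

theorem ynorm2e_le_of_sum_range_le {γ : ℕ → ℝ} (hγ : Monotone γ)
    (hΓ : ∀ n, γ (n + 2) - γ (n + 1) ≤ γ (n + 1) - γ n) {a c : ℕ → ℂ}
    (h : ∀ n, ∑ i ∈ range n, ‖a i‖ ^ 2 ≤ ∑ i ∈ range n, ‖c i‖ ^ 2) :
    ynorm2e γ a ≤ ynorm2e γ c := by
  have hΓ0 : ∀ n, 0 ≤ γ (n + 1) - γ n := fun n => sub_nonneg.2 (hγ n.le_succ)
  rw [ynorm2e, ynorm2e, ENNReal.tsum_eq_iSup_nat, ENNReal.tsum_eq_iSup_nat]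
  refine iSup_mono fun N => ?_
  rw [← ENNReal.ofReal_sum_of_nonneg fun n _ => mul_nonneg (hΓ0 n) (sq_nonneg _),
    ← ENNReal.ofReal_sum_of_nonneg fun n _ => mul_nonneg (hΓ0 n) (sq_nonneg _)]
  exact ENNReal.ofReal_le_ofReal
    (sum_range_mul_le_of_antitone (antitone_nat_of_succ_le hΓ) hΓ0 h N)

theorem norm_le_sum_norm_of_sum_sq_le {E F : Type*} [SeminormedAddGroup E]
    [SeminormedAddGroup F] {a : ℕ → E} {c : ℕ → F} {n : ℕ}
    (h : ∑ i ∈ range (n + 1), ‖a i‖ ^ 2 ≤ ∑ i ∈ range (n + 1), ‖c i‖ ^ 2) :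
    ‖a n‖ ≤ ∑ i ∈ range (n + 1), ‖c i‖ := by
  refine le_of_sq_le_sq ?_ (sum_nonneg fun i _ => norm_nonneg _)
  calc ‖a n‖ ^ 2 ≤ ∑ i ∈ range (n + 1), ‖a i‖ ^ 2 :=
        single_le_sum (f := fun i => ‖a i‖ ^ 2) (fun i _ => sq_nonneg _) (self_mem_range_succ n)
    _ ≤ ∑ i ∈ range (n + 1), ‖c i‖ ^ 2 := h
    _ ≤ (∑ i ∈ range (n + 1), ‖c i‖) ^ 2 := sum_sq_le_sq_sum_of_nonneg fun i _ => norm_nonneg _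

theorem IsCoeffs.summable_sum_range_norm_mul_pow {c : ℕ → ℂ} {f : ℂ → ℂ} (hc : IsCoeffs c f)
    {z : ℂ} (hz : ‖z‖ < 1) :
    Summable fun n => (∑ i ∈ range (n + 1), ‖c i‖) * ‖z‖ ^ n := by
  have hgeom : Summable fun n => ‖‖z‖ ^ n‖ := by
    simpa using summable_geometric_of_lt_one (norm_nonneg z) hz
  refine (summable_norm_sum_mul_range_of_summable_norm (f := fun i => ‖c i * z ^ i‖)
    (by simpa using hc.summable_norm hz) hgeom).congr fun n => ?_
  rw [Real.norm_of_nonneg (sum_nonneg fun i _ => by positivity), sum_mul]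
  refine sum_congr rfl fun i hi => ?_
  rw [norm_mul, norm_pow, mul_assoc, ← pow_add, Nat.add_sub_cancel' (mem_range_succ_iff.1 hi)]

theorem sum_range_sq_norm_le_of_tendsto_prod_blaschke_mul {ι : Type*} {α : ι → ℂ}
    {s : ℕ → Finset ι} (hα : ∀ K, ∀ j ∈ s K, ‖α j‖ < 1) {u v : ℕ → ℂ} {g h : ℂ → ℂ}
    (hu : IsCoeffs u g) (S : Finset ℂ)
    (hv : ∀ z : ℂ, ‖z‖ < 1 → z ∉ S → HasSum (fun n => v n * z ^ n) (h z))
    (hlim : ∀ z : ℂ, ‖z‖ < 1 → z ∉ S →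
      Tendsto (fun K => (∏ j ∈ s K, blaschke (α j) z) * g z) atTop (𝓝 (h z)))
    (N : ℕ) : ∑ i ∈ range N, ‖v i‖ ^ 2 ≤ ∑ i ∈ range N, ‖u i‖ ^ 2 := by
  choose A hA hAu using fun K => exists_isCoeffs_prod_blaschke_mul (s K) (hα K) hu
  set B : ℕ → ℝ := fun n => ∑ i ∈ range (n + 1), ‖u i‖
  have hAB : ∀ K n, ‖A K n‖ ≤ B n := fun K n => norm_le_sum_norm_of_sum_sq_le (hAu K (n + 1))
  obtain ⟨a, ha, φ, hφ, hlimA⟩ :=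
    (isCompact_univ_pi fun n => isCompact_closedBall (0 : ℂ) (B n)).tendsto_subseq
      (x := A) fun K n _ => mem_closedBall_zero_iff.2 (hAB K n)
  have hcoeff : ∀ n, Tendsto (fun K => A (φ K) n) atTop (𝓝 (a n)) := tendsto_pi_nhds.1 hlimA
  have hsum : ∀ z : ℂ, ‖z‖ < 1 → z ∉ S → HasSum (fun n => a n * z ^ n) (h z) := by
    intro z hz hzS
    have hbound := hu.summable_sum_range_norm_mul_pow hz
    have hdom : ∀ K n, ‖A (φ K) n * z ^ n‖ ≤ B n * ‖z‖ ^ n := fun K n => by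
      rw [norm_mul, norm_pow]
      exact mul_le_mul_of_nonneg_right (hAB _ n) (by positivity)
    have htannery := tendsto_tsum_of_dominated_convergence hbound
      (fun n => (hcoeff n).mul_const (z ^ n)) (Eventually.of_forall (hdom ·))
    have hlim' : Tendsto (fun K => ∑' n, A (φ K) n * z ^ n) atTop (𝓝 (h z)) :=
      ((hlim z hz hzS).comp hφ.tendsto_atTop).congr fun K => ((hA (φ K)) z hz).tsum_eq.symm
    rw [← tendsto_nhds_unique htannery hlim']
    refine (Summable.of_norm_bounded hbound fun n => ?_).hasSum
    rw [norm_mul, norm_pow]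
    exact mul_le_mul_of_nonneg_right (mem_closedBall_zero_iff.1 (ha n trivial)) (by positivity)
  rw [← eq_of_hasSum_mul_pow_off_finset S hsum hv]
  exact le_of_tendsto_of_tendsto' (tendsto_finsetSum _ fun i _ => ((hcoeff i).norm.pow 2))
    tendsto_const_nhds fun K => hAu (φ K) N

theorem eq_prod_Icc_add_one_mul_of_eq_prod_Icc_mul {M : Type*} [CommMonoidWithZero M]
    [IsCancelMulZero M] (f : ℕ → M) {k K : ℕ} (hkK : k ≤ K) {x y w : M} (hne : ∏ j ∈ Icc 1 k, f j ≠ 0)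
    (hx : w = (∏ j ∈ Icc 1 k, f j) * x) (hy : w = (∏ j ∈ Icc 1 K, f j) * y) :
    x = (∏ j ∈ Icc (k + 1) K, f j) * y := by
  refine mul_left_cancel₀ hne ?_
  rw [← mul_assoc, ← hx, hy]
  simp only [Icc_add_one_left_eq_Ioc]
  exact congrArg (· * y) (prod_Ioc_consecutive f (Nat.zero_le k) hkK).symm

theorem div_sub_eq_prod_blaschke_mul_div {α : ℕ → ℂ} {k : ℕ} (hk : 1 ≤ k) {z x y : ℂ}
    (hzk : z ≠ α k)
    (hx : x = (∏ j ∈ Icc 1 k, blaschke (α j) z) * y) :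
    x / (z - α k) = (∏ j ∈ Icc 1 (k - 1), blaschke (α j) z) * (y / (1 - conj (α k) * z)) := by
  rw [hx, ← Nat.sub_add_cancel hk, prod_Icc_succ_top (by omega), Nat.sub_add_cancel hk, blaschke,
    div_eq_iff (sub_ne_zero.2 hzk)]
  ring

theorem prod_blaschke_ne_zero {α : ℕ → ℂ} {s : Finset ℕ} (hα : ∀ j ∈ s, ‖α j‖ < 1) {z : ℂ}
    (hz : ‖z‖ < 1) (hzs : z ∉ s.image α) : ∏ j ∈ s, blaschke (α j) z ≠ 0 :=
  prod_ne_zero_iff.2 fun j hj =>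
    blaschke_ne_zero (hα j hj) hz fun h => hzs (mem_image.2 ⟨j, hj, h.symm⟩)

theorem norm_prod_blaschke_le_one {ι : Type*} {α : ι → ℂ} {s : Finset ι}
    (hα : ∀ j ∈ s, ‖α j‖ < 1) {z : ℂ} (hz : ‖z‖ < 1) : ‖∏ j ∈ s, blaschke (α j) z‖ ≤ 1 := by
  rw [norm_prod]
  exact prod_le_one (fun _ _ => norm_nonneg _) fun j hj => norm_blaschke_le_one (hα j hj) hz

theorem tendsto_mul_of_eventually_eq_mul {P x : ℕ → ℂ} {y c : ℂ} (hP : ∀ K, ‖P K‖ ≤ 1)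
    (hx : Tendsto x atTop (𝓝 y)) (hc : ∀ᶠ K in atTop, c = P K * x K) :
    Tendsto (fun K => P K * y) atTop (𝓝 c) := by
  refine tendsto_sub_nhds_zero_iff.1 (squeeze_zero_norm' ?_
    (by simpa using (tendsto_sub_nhds_zero_iff.2 hx).norm))
  filter_upwards [hc] with K hK
  rw [hK, ← mul_sub, norm_mul, norm_sub_rev]
  exact mul_le_of_le_one_left (norm_nonneg _) (hP K)

theorem stmt9_general (γ : ℕ → ℝ) (hmono : Monotone γ)
    (hconc : ∀ n, γ (n + 2) - γ (n + 1) ≤ γ (n + 1) - γ n)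
    (m : ℕ∞) (α : ℕ → ℂ)
    (hα : ∀ j : ℕ, 1 ≤ j → (j : ℕ∞) ≤ m → ‖α j‖ < 1)
    (F G : ℂ → ℂ) (Fk : ℕ → ℂ → ℂ)
    (hfac : ∀ k : ℕ, (k : ℕ∞) ≤ m → ∀ z : ℂ, ‖z‖ < 1 →
      F z = (∏ j ∈ Icc 1 k, (z - α j) / (1 - (starRingEnd ℂ) (α j) * z)) * Fk k z)
    (hGfin : ∀ mf : ℕ, m = (mf : ℕ∞) → ∀ z : ℂ, ‖z‖ < 1 → Fk mf z = G z)
    (hGinf : m = ⊤ → ∀ z : ℂ, ‖z‖ < 1 →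
      Tendsto (fun k => Fk k z) atTop (nhds (G z)))
    (u v w : ℕ → ℕ → ℂ)
    -- `u k` : coefficients of `G(z)/(1-ᾱ_k z)`
    (hu : ∀ k : ℕ, 1 ≤ k → (k : ℕ∞) ≤ m → ∀ z : ℂ, ‖z‖ < 1 →
      HasSum (fun n => u k n * z ^ n) (G z / (1 - (starRingEnd ℂ) (α k) * z)))
    -- `v k` : coefficients of `H_{α_k}(z) = F_k(z)/(1-ᾱ_k z)`
    (hv : ∀ k : ℕ, 1 ≤ k → (k : ℕ∞) ≤ m → ∀ z : ℂ, ‖z‖ < 1 →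
      HasSum (fun n => v k n * z ^ n) (Fk k z / (1 - (starRingEnd ℂ) (α k) * z)))
    -- `w k` : coefficients of `F(z)/(z-α_k)` (singularity removed)
    (hw : ∀ k : ℕ, 1 ≤ k → (k : ℕ∞) ≤ m → ∀ z : ℂ, ‖z‖ < 1 → z ≠ α k →
      HasSum (fun n => w k n * z ^ n) (F z / (z - α k))) :
    ∀ k : ℕ, 1 ≤ k → (k : ℕ∞) ≤ m →
      ynorm2e γ (w k) ≤ ynorm2e γ (v k) ∧ ynorm2e γ (v k) ≤ ynorm2e γ (u k) := by
  intro k hk hkm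
  have hαm : ∀ K : ℕ, (K : ℕ∞) ≤ m → ∀ j ∈ Icc 1 K, ‖α j‖ < 1 := fun K hK j hj =>
    hα j (mem_Icc.1 hj).1 ((Nat.cast_le.2 (mem_Icc.1 hj).2).trans hK)
  have hFk : ∀ K : ℕ, k ≤ K → (K : ℕ∞) ≤ m → ∀ z : ℂ, ‖z‖ < 1 → z ∉ (Icc 1 k).image α →
      Fk k z / (1 - conj (α k) * z)
        = (∏ j ∈ Icc (k + 1) K, blaschke (α j) z) * (Fk K z / (1 - conj (α k) * z)) :=
    fun K hkK hKm z hz hzS => by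
      rw [← mul_div_assoc, ← eq_prod_Icc_add_one_mul_of_eq_prod_Icc_mul _ hkK
        (prod_blaschke_ne_zero (hαm k hkm) hz hzS) (hfac k hkm z hz) (hfac K hKm z hz)]
  refine ⟨ynorm2e_le_of_sum_range_le hmono hconc ?_, ynorm2e_le_of_sum_range_le hmono hconc ?_⟩
  · refine sum_range_sq_norm_le_of_tendsto_prod_blaschke_mul (s := fun _ => Icc 1 (k - 1))
      (fun _ j hj => hαm k hkm j (Icc_subset_Icc_right (Nat.sub_le k 1) hj)) (hv k hk hkm) {α k}
      (fun z hz hzS => hw k hk hkm z hz (by simpa using hzS)) fun z hz hzS => ?_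
    rw [div_sub_eq_prod_blaschke_mul_div hk (by simpa using hzS) (hfac k hkm z hz)]
    exact tendsto_const_nhds
  · cases m using ENat.recTopCoe with
    | top =>
      have hαs : ∀ K, ∀ j ∈ Icc (k + 1) K, ‖α j‖ < 1 := fun K j hj =>
        hα j (by linarith [(mem_Icc.1 hj).1]) le_top
      refine sum_range_sq_norm_le_of_tendsto_prod_blaschke_mul hαs (hu k hk hkm)
        ((Icc 1 k).image α) (fun z hz _ => hv k hk hkm z hz) fun z hz hzS =>
          tendsto_mul_of_eventually_eq_mul (fun K => norm_prod_blaschke_le_one (hαs K) hz)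
            ((hGinf rfl z hz).div_const _) ?_
      filter_upwards [eventually_ge_atTop k] with K hkK using hFk K hkK le_top z hz hzS
    | coe mf =>
      refine sum_range_sq_norm_le_of_tendsto_prod_blaschke_mul (s := fun _ => Icc (k + 1) mf)
        (fun _ j hj => hαm mf le_rfl j (Icc_subset_Icc_left (by omega) hj)) (hu k hk hkm)
        ((Icc 1 k).image α) (fun z hz _ => hv k hk hkm z hz) fun z hz hzS => ?_
      rw [hFk mf (Nat.cast_le.1 hkm) le_rfl z hz hzS, hGfin mf rfl z hz]
      exact tendsto_const_nhds

/-- Lemma (decreasing differences): with `F ∈ X_γ` having zeros `α_1, α_2, …` (ordered by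
increasing modulus, `m` finite or infinite), Blaschke decomposition `F = B·G`, partial
decompositions `F_k` (so `F = (∏_{j=1}^k (z-α_j)/(1-ᾱ_j z))·F_k` and `F_k → G`), and
`H_{α_k} = F_k/(1-ᾱ_k z)`: if `γ_{n+1}-γ_n` is monotone decreasing then for each `k`,
`‖F/(·-α_k)‖_{Y_γ}² ≤ ‖H_{α_k}‖_{Y_γ}² ≤ ‖G/(1-ᾱ_k·)‖_{Y_γ}²`. -/
theorem stmt9 (γ : ℕ → ℝ) (hmono : Monotone γ) (h0 : γ 0 = 0)
    (hconc : ∀ n, γ (n + 2) - γ (n + 1) ≤ γ (n + 1) - γ n)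
    (m : ℕ∞) (α : ℕ → ℂ)
    (hα : ∀ j : ℕ, 1 ≤ j → (j : ℕ∞) ≤ m → ‖α j‖ < 1)
    (hord : ∀ j : ℕ, 1 ≤ j → ((j : ℕ∞) + 1) ≤ m → ‖α j‖ ≤ ‖α (j + 1)‖)
    (F G : ℂ → ℂ) (Fk : ℕ → ℂ → ℂ) (hFk0 : Fk 0 = F)
    (hfac : ∀ k : ℕ, (k : ℕ∞) ≤ m → ∀ z : ℂ, ‖z‖ < 1 →
      F z = (∏ j ∈ Icc 1 k, (z - α j) / (1 - (starRingEnd ℂ) (α j) * z)) * Fk k z)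
    (hG0 : ∀ z : ℂ, ‖z‖ < 1 → G z ≠ 0)
    (hGfin : ∀ mf : ℕ, m = (mf : ℕ∞) → ∀ z : ℂ, ‖z‖ < 1 → Fk mf z = G z)
    (hGinf : m = ⊤ → ∀ z : ℂ, ‖z‖ < 1 →
      Tendsto (fun k => Fk k z) atTop (nhds (G z)))
    (f : ℕ → ℂ) (hf : IsCoeffs f F)
    (hH2 : Summable fun n => ‖f n‖ ^ 2)
    (hX : Summable fun n => γ n * ‖f n‖ ^ 2)
    (u v w : ℕ → ℕ → ℂ)
    -- `u k` : coefficients of `G(z)/(1-ᾱ_k z)`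
    (hu : ∀ k : ℕ, 1 ≤ k → (k : ℕ∞) ≤ m → ∀ z : ℂ, ‖z‖ < 1 →
      HasSum (fun n => u k n * z ^ n) (G z / (1 - (starRingEnd ℂ) (α k) * z)))
    -- `v k` : coefficients of `H_{α_k}(z) = F_k(z)/(1-ᾱ_k z)`
    (hv : ∀ k : ℕ, 1 ≤ k → (k : ℕ∞) ≤ m → ∀ z : ℂ, ‖z‖ < 1 →
      HasSum (fun n => v k n * z ^ n) (Fk k z / (1 - (starRingEnd ℂ) (α k) * z)))
    -- `w k` : coefficients of `F(z)/(z-α_k)` (singularity removed)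
    (hw : ∀ k : ℕ, 1 ≤ k → (k : ℕ∞) ≤ m → ∀ z : ℂ, ‖z‖ < 1 → z ≠ α k →
      HasSum (fun n => w k n * z ^ n) (F z / (z - α k))) :
    ∀ k : ℕ, 1 ≤ k → (k : ℕ∞) ≤ m →
      ynorm2e γ (w k) ≤ ynorm2e γ (v k) ∧ ynorm2e γ (v k) ≤ ynorm2e γ (u k) :=
  stmt9_general γ hmono hconc m α hα F G Fk hfac hGfin hGinf u v w hu hv hw
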